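/- The eigenvalues of the (n+1)×(n+1) Kac matrix S_n are exactly the n+1 distinct integers n, n−2, n−4, ..., −n+2, −n, each with algebraic multiplicity one. -/

import Mathlib

open Polynomial

/-- The `(n+1) × (n+1)` Kac matrix: subdiagonal entries `1, 2, ..., n`,
superdiagonal entries `n, n-1, ..., 1`, and zeros elsewhere. -/
def kacMatrix (n : ℕ) : Matrix (Fin (n + 1)) (Fin (n + 1)) ℝ :=
  Matrix.of fun i j =>
    if (i : ℕ) = (j : ℕ) + 1 then (i : ℝ)
    else if (j : ℕ) = (i : ℕ) + 1 then (n : ℝ) + 1 - (j : ℝ)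
    else 0

/-!
The transpose of `kacMatrix n` is the matrix, in the monomial basis of the polynomials of degree
at most `n`, of the operator `L p = (1 - X²) p' + n X p`. The polynomial `(1 - X)^d (1 + X)^(n - d)`
satisfies `L P = (n - 2d) P`, so every `n - 2d` with `d ≤ n` is an eigenvalue. These are `n + 1`
distinct roots of a characteristic polynomial of degree `n + 1`, hence all of its roots, each simple.
-/

open Matrix

theorem Matrix.isRoot_charpoly_iff_exists_mulVec_eq_smul {K ι : Type*} [Field K] [Fintype ι]
    [DecidableEq ι] (A : Matrix ι ι K) (μ : K) :
    A.charpoly.IsRoot μ ↔ ∃ v : ι → K, v ≠ 0 ∧ A *ᵥ v = μ • v := by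
  rw [← charpoly_toLin', ← Module.End.hasEigenvalue_iff_isRoot_charpoly]
  constructor
  · intro h
    obtain ⟨v, hv⟩ := h.exists_hasEigenvector
    exact ⟨v, hv.2, by simpa using hv.apply_eq_smul⟩
  · rintro ⟨v, hv0, hv⟩
    exact Module.End.hasEigenvalue_of_hasEigenvector
      ⟨Module.End.mem_eigenspace_iff.2 (by simpa using hv), hv0⟩

noncomputable def kacOperator (n : ℕ) : ℝ[X] →ₗ[ℝ] ℝ[X] :=
  LinearMap.mulLeft ℝ (1 - X ^ 2) ∘ₗ derivative + LinearMap.mulLeft ℝ (C (n : ℝ) * X)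

theorem kacOperator_apply (n : ℕ) (p : ℝ[X]) :
    kacOperator n p = (1 - X ^ 2) * derivative p + C (n : ℝ) * X * p := rfl

theorem kacOperator_X_pow (n i : ℕ) :
    kacOperator n (X ^ i) = C (i : ℝ) * X ^ (i - 1) + C ((n : ℝ) - i) * X ^ (i + 1) := by
  rw [kacOperator_apply]
  cases i with
  | zero => simp
  | succ i => simp only [derivative_X_pow, map_sub]; push_cast; ring

theorem kacMatrix_apply_eq_coeff (n : ℕ) (i j : Fin (n + 1)) :
    kacMatrix n i j = (kacOperator n (X ^ (i : ℕ))).coeff j := by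
  rw [kacOperator_X_pow, coeff_add, coeff_C_mul_X_pow, coeff_C_mul_X_pow, kacMatrix,
    Matrix.of_apply]
  obtain ⟨i, -⟩ := i
  obtain ⟨j, -⟩ := j
  dsimp only
  by_cases hij : i = j + 1
  · rw [if_pos hij, if_pos (by omega), if_neg (by omega), add_zero]
  by_cases hji : j = i + 1
  · rw [if_neg hij, if_pos hji, if_neg (by omega), if_pos hji, hji]
    push_cast
    ring
  · rw [if_neg hij, if_neg hji, if_neg hji, add_zero]
    split_ifs with h
    · obtain rfl : i = 0 := by omega
      simp
    · rfl

theorem vecMul_kacMatrix {n : ℕ} {p : ℝ[X]} (hp : p.natDegree ≤ n) :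
    (fun i : Fin (n + 1) => p.coeff i) ᵥ* kacMatrix n
      = fun j : Fin (n + 1) => (kacOperator n p).coeff j := by
  funext j
  conv_rhs => rw [p.as_sum_range_C_mul_X_pow' (Nat.lt_succ_of_le hp)]
  simp [vecMul, dotProduct, finsetSum_coeff, kacMatrix_apply_eq_coeff, ← smul_eq_C_mul,
    Fin.sum_univ_eq_sum_range (fun i => p.coeff i * (kacOperator n (X ^ i)).coeff j)]

theorem kacOperator_one_sub_X_pow_mul_one_add_X_pow (a b : ℕ) :
    kacOperator (a + b) ((1 - X) ^ a * (1 + X) ^ b)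
      = C ((b : ℝ) - a) * ((1 - X) ^ a * (1 + X) ^ b) := by
  rw [kacOperator_apply]
  cases a <;> cases b <;> simp [derivative_pow_succ] <;> ring

theorem natDegree_one_sub_X_pow_mul_one_add_X_pow_le {R : Type*} [CommRing R] (a b : ℕ) :
    ((1 - X : R[X]) ^ a * (1 + X) ^ b).natDegree ≤ a + b := by
  compute_degree

theorem isRoot_charpoly_kacMatrix {n d : ℕ} (hd : d ≤ n) :
    (kacMatrix n).charpoly.IsRoot ((n : ℝ) - 2 * d) := by
  set P : ℝ[X] := (1 - X) ^ d * (1 + X) ^ (n - d)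
  have hn : d + (n - d) = n := Nat.add_sub_cancel' hd
  have hP : kacOperator n P = C ((n : ℝ) - 2 * d) * P := by
    have h := kacOperator_one_sub_X_pow_mul_one_add_X_pow d (n - d)
    rwa [hn, Nat.cast_sub hd, sub_sub, ← two_mul] at h
  have hdeg : P.natDegree ≤ n := hn ▸ natDegree_one_sub_X_pow_mul_one_add_X_pow_le d (n - d)
  have hP0 : P.coeff 0 = 1 := by simp [P, coeff_zero_eq_eval_zero]
  rw [← charpoly_transpose, isRoot_charpoly_iff_exists_mulVec_eq_smul]
  refine ⟨fun i => P.coeff i, fun h => ?_, ?_⟩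
  · simpa [hP0] using congrFun h 0
  · rw [mulVec_transpose, vecMul_kacMatrix hdeg, hP]
    ext j
    simp only [coeff_C_mul, Pi.smul_apply, smul_eq_mul]

/-- The eigenvalues of the Kac matrix are exactly `n, n-2, ..., -n`, each with
algebraic multiplicity one: the multiset of roots of the characteristic
polynomial is exactly `{n - 2d : 0 ≤ d ≤ n}` (each with multiplicity one), and
a real number is an eigenvalue iff it is of the form `n - 2d` with `0 ≤ d ≤ n`. -/
theorem kac_eigenvalues (n : ℕ) :
    ((kacMatrix n).charpoly).roots
        = (Finset.range (n + 1)).val.map (fun d => (n : ℝ) - 2 * d) ∧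
      ∀ μ : ℝ, (∃ v : Fin (n + 1) → ℝ, v ≠ 0 ∧ (kacMatrix n).mulVec v = μ • v) ↔
        ∃ d : ℕ, d ≤ n ∧ μ = (n : ℝ) - 2 * d := by
  have hnodup : ((Finset.range (n + 1)).val.map fun d : ℕ => (n : ℝ) - 2 * d).Nodup :=
    (Finset.range (n + 1)).nodup.map fun a b h => by simpa using h
  have hroots : (kacMatrix n).charpoly.roots
      = (Finset.range (n + 1)).val.map fun d : ℕ => (n : ℝ) - 2 * d := by
    refine roots_eq_of_natDegree_le_card_of_ne_zero (S := ⟨_, hnodup⟩) ?_ (by simp)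
      (charpoly_monic _).ne_zero
    intro μ hμ
    obtain ⟨d, hd, rfl⟩ := Multiset.mem_map.1 (Finset.mem_mk.1 hμ)
    exact isRoot_charpoly_kacMatrix (Nat.lt_succ_iff.1 (Finset.mem_range.1 hd))
  refine ⟨?_, fun μ => ?_⟩
  -- in the statement `d : ℝ`, and `Finset.range (n + 1)` is cast to a multiset of reals
  · simp only [hroots, Multiset.pure_def, Multiset.bind_def, Multiset.bind_singleton,
      Multiset.map_map, Function.comp_def]
  rw [← isRoot_charpoly_iff_exists_mulVec_eq_smul, ← mem_roots (charpoly_monic _).ne_zero, hroots]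
  simp only [Multiset.mem_map, Finset.mem_val, Finset.mem_range, Nat.lt_succ_iff, eq_comm]
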